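/- Let G be a finite acyclic directed graph with vertex set V whose edge set is partitioned into 1-edges E₁ and 2-edges E₂, satisfying axiom (B0). Let ℓ : V → {0, c, 1} be a labeling satisfying the local axioms (B1(i)), (B1(ii)), (B2(i)), (B2(ii)). Declare a vertex v central if ℓ(v) = c, and declare a 1-edge (u,v) central if (ℓ(u),ℓ(v)) = (0,1). Then this designation of central elements satisfies axioms (B1) and (B2); moreover every vertex labeled 0 is left and every vertex labeled 1 is right with respect to this designation. -/

import Mathlib

/-!
Order the labels `0 < c < 1`. By (B1(i)) the labels weakly increase along a 1-string and
never repeat `c`, and by (B1(ii)) the string starts below `1` and ends above `0`; so it reads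
`0…0 c 1…1` or `0…0 1…1`, its central element is the `c` or the unique `(0,1)`-edge, and every
`0` (resp. `1`) lies before (resp. after) it. Dually, by (B2(i)) the labels weakly decrease
along a 2-string and never jump from `1` to `0`, while by (B2(ii)) the string starts above `0`
and ends below `1`; so it reads `1…1 c 0…0`. Every vertex lies on a 1-string: by finiteness
and acyclicity a longest 1-path through it exists, and it cannot be extended at either end.
-/

/-- The three-element label set `{0, c, 1}`. -/
inductive Lab : Type
  | zero | c | one
deriving DecidableEq

/-- A maximal directed path (a "string") in a digraph `E`: a sequence of distinct
vertices `p 0, …, p n` with consecutive edges, whose first vertex has no entering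
edge and whose last vertex has no leaving edge. -/
def IsMaxPath {V : Type*} (E : V → V → Prop) (n : ℕ) (p : Fin (n + 1) → V) : Prop :=
  Function.Injective p ∧
  (∀ i : Fin n, E (p i.castSucc) (p i.succ)) ∧
  (∀ u : V, ¬ E u (p 0)) ∧
  (∀ u : V, ¬ E (p (Fin.last n)) u)

/-- Axiom (B0) for one color: every vertex has at most one leaving and at most one
entering edge of that color. -/
def AxiomB0 {V : Type*} (E : V → V → Prop) : Prop :=
  (∀ u v w : V, E u v → E u w → v = w) ∧ (∀ u v w : V, E u w → E v w → u = v)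

/-- Local axiom (B1(i)): for each 1-edge `(u, v)`, the pair of labels `(ℓ u, ℓ v)` is
one of `(0,0), (0,c), (0,1), (c,1), (1,1)`. -/
def B1i {V : Type*} (E₁ : V → V → Prop) (ℓ : V → Lab) : Prop :=
  ∀ u v : V, E₁ u v →
    (ℓ u, ℓ v) ∈ ({(Lab.zero, Lab.zero), (Lab.zero, Lab.c), (Lab.zero, Lab.one),
      (Lab.c, Lab.one), (Lab.one, Lab.one)} : Set (Lab × Lab))

/-- Local axiom (B1(ii)): if `v` has no entering 1-edge then `ℓ v ≠ 1`, and if `v` has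
no leaving 1-edge then `ℓ v ≠ 0`. -/
def B1ii {V : Type*} (E₁ : V → V → Prop) (ℓ : V → Lab) : Prop :=
  ∀ v : V, ((∀ u : V, ¬ E₁ u v) → ℓ v ≠ Lab.one) ∧ ((∀ u : V, ¬ E₁ v u) → ℓ v ≠ Lab.zero)

/-- Local axiom (B2(i)): for each 2-edge `(u, v)`, the pair of labels `(ℓ u, ℓ v)` is
one of `(1,1), (1,c), (c,0), (0,0)`. -/
def B2i {V : Type*} (E₂ : V → V → Prop) (ℓ : V → Lab) : Prop :=
  ∀ u v : V, E₂ u v →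
    (ℓ u, ℓ v) ∈ ({(Lab.one, Lab.one), (Lab.one, Lab.c), (Lab.c, Lab.zero),
      (Lab.zero, Lab.zero)} : Set (Lab × Lab))

/-- Local axiom (B2(ii)): if `v` has no entering 2-edge then `ℓ v ≠ 0`, and if `v` has
no leaving 2-edge then `ℓ v ≠ 1`. -/
def B2ii {V : Type*} (E₂ : V → V → Prop) (ℓ : V → Lab) : Prop :=
  ∀ v : V, ((∀ u : V, ¬ E₂ u v) → ℓ v ≠ Lab.zero) ∧ ((∀ u : V, ¬ E₂ v u) → ℓ v ≠ Lab.one)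

/-- Axiom (B1): each 1-string contains exactly one central element, which is either a
central vertex or a central 1-edge. -/
def AxiomB1 {V : Type*} (E₁ : V → V → Prop) (Cv : V → Prop) (Ce : V → V → Prop) : Prop :=
  ∀ (n : ℕ) (p : Fin (n + 1) → V), IsMaxPath E₁ n p →
    ((∃! i : Fin (n + 1), Cv (p i)) ∧ (∀ j : Fin n, ¬ Ce (p j.castSucc) (p j.succ))) ∨
    ((∃! j : Fin n, Ce (p j.castSucc) (p j.succ)) ∧ (∀ i : Fin (n + 1), ¬ Cv (p i)))

/-- A vertex is *left* if it lies in its 1-string strictly before the central element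
(where for a central 1-edge, the beginning vertex of the edge counts as left). -/
def LeftVtx {V : Type*} (E₁ : V → V → Prop) (Cv : V → Prop) (Ce : V → V → Prop)
    (v : V) : Prop :=
  ∃ (n : ℕ) (p : Fin (n + 1) → V) (i : Fin (n + 1)), IsMaxPath E₁ n p ∧ p i = v ∧
    ((∃ j : Fin (n + 1), Cv (p j) ∧ (i : ℕ) < (j : ℕ)) ∨
     (∃ j : Fin n, Ce (p j.castSucc) (p j.succ) ∧ (i : ℕ) ≤ (j : ℕ)))

/-- A vertex is *right* if it lies in its 1-string strictly after the central element
(where for a central 1-edge, the end vertex of the edge counts as right). -/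
def RightVtx {V : Type*} (E₁ : V → V → Prop) (Cv : V → Prop) (Ce : V → V → Prop)
    (v : V) : Prop :=
  ∃ (n : ℕ) (p : Fin (n + 1) → V) (i : Fin (n + 1)), IsMaxPath E₁ n p ∧ p i = v ∧
    ((∃ j : Fin (n + 1), Cv (p j) ∧ (j : ℕ) < (i : ℕ)) ∨
     (∃ j : Fin n, Ce (p j.castSucc) (p j.succ) ∧ (j : ℕ) < (i : ℕ)))

/-- Axiom (B2): each 2-string contains exactly one central vertex; all vertices of the
2-string before it are right, and all vertices after it are left. -/
def AxiomB2 {V : Type*} (E₁ E₂ : V → V → Prop) (Cv : V → Prop) (Ce : V → V → Prop) : Prop :=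
  ∀ (n : ℕ) (q : Fin (n + 1) → V), IsMaxPath E₂ n q →
    (∃! i : Fin (n + 1), Cv (q i)) ∧
    (∀ i j : Fin (n + 1), Cv (q i) →
      (j < i → RightVtx E₁ Cv Ce (q j)) ∧ (i < j → LeftVtx E₁ Cv Ce (q j)))

open Relation

section FinSeq

variable {n : ℕ}

theorem Fin.exists_castSucc_and_not_succ {P : Fin (n + 1) → Prop} {i k : Fin (n + 1)}
    (hik : i ≤ k) (hi : P i) (hk : ¬ P k) :
    ∃ j : Fin n, i ≤ j.castSucc ∧ j.succ ≤ k ∧ P j.castSucc ∧ ¬ P j.succ := by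
  induction k using Fin.induction with
  | zero => exact absurd (Fin.le_zero_iff.1 hik ▸ hi) hk
  | succ m ih =>
    have him : i ≤ m.castSucc :=
      Fin.le_castSucc_iff.2 (hik.lt_of_ne (by rintro rfl; exact hk hi))
    by_cases hm : P m.castSucc
    · exact ⟨m, him, le_rfl, hm, hk⟩
    · obtain ⟨j, hij, hjm, hj⟩ := ih him hm
      exact ⟨j, hij, hjm.trans Fin.castSucc_lt_succ.le, hj⟩

variable {α : Type*} [PartialOrder α] {f : Fin (n + 1) → α}

theorem Monotone.eq_of_apply_eq_fin (hf : Monotone f) {a : α}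
    (ha : ∀ j : Fin n, f j.castSucc = a → f j.succ ≠ a) {i k : Fin (n + 1)}
    (hi : f i = a) (hk : f k = a) : i = k := by
  wlog hik : i ≤ k generalizing i k
  · exact (this hk hi (le_of_not_ge hik)).symm
  refine hik.eq_or_lt.resolve_right fun hlt => ?_
  obtain ⟨j, rfl⟩ := Fin.exists_castSucc_eq.2 (Fin.ne_last_of_lt hlt)
  exact ha j hi (le_antisymm (hk ▸ hf (Fin.castSucc_lt_iff_succ_le.1 hlt))
    (hi ▸ hf Fin.castSucc_lt_succ.le))

theorem Monotone.ne_of_lt_of_lt_fin (hf : Monotone f) (j : Fin n) {x : α}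
    (h₁ : f j.castSucc < x) (h₂ : x < f j.succ) (i : Fin (n + 1)) : f i ≠ x := by
  rintro rfl
  rcases le_or_gt i j.castSucc with h | h
  · exact (hf h).not_gt h₁
  · exact (hf (Fin.castSucc_lt_iff_succ_le.1 h)).not_gt h₂

theorem Monotone.eq_of_lt_of_lt_fin (hf : Monotone f) {x : α} {j k : Fin n}
    (hj₁ : f j.castSucc < x) (hj₂ : x < f j.succ) (hk₁ : f k.castSucc < x) (hk₂ : x < f k.succ) :
    j = k := by
  wlog hjk : j ≤ k generalizing j k
  · exact (this hk₁ hk₂ hj₁ hj₂ (le_of_not_ge hjk)).symm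
  refine hjk.eq_or_lt.resolve_right fun hlt => ?_
  exact (hf (Fin.succ_le_castSucc_iff.2 hlt)).not_gt (hk₁.trans hj₂)

end FinSeq

section Strings

variable {V : Type*} {E : V → V → Prop} {n : ℕ} {p : Fin (n + 1) → V}

theorem Fin.transGen_of_lt (hp : ∀ i : Fin n, E (p i.castSucc) (p i.succ))
    {i j : Fin (n + 1)} (hij : i < j) : TransGen E (p i) (p j) := by
  induction j using Fin.induction with
  | zero => exact absurd hij (Fin.not_lt_zero i)
  | succ k ih =>
    rcases (Fin.le_castSucc_iff.2 hij).lt_or_eq with h | h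
    · exact (ih h).tail (hp k)
    · exact h ▸ .single (hp k)

theorem Fin.injective_of_acyclic (hacyc : ∀ v, ¬ TransGen E v v)
    (hp : ∀ i : Fin n, E (p i.castSucc) (p i.succ)) : Function.Injective p :=
  .of_lt_imp_ne fun _ _ hij heq => hacyc _ (heq ▸ Fin.transGen_of_lt hp hij)

theorem exists_isMaxPath_apply_eq [Finite V] (hacyc : ∀ v, ¬ TransGen E v v) (v : V) :
    ∃ (n : ℕ) (p : Fin (n + 1) → V) (i : Fin (n + 1)), IsMaxPath E n p ∧ p i = v := by
  let r : SetRel V V := {(a, b) | E a b}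
  let S : Set ℕ := {k | ∃ s : RelSeries r, s.length = k ∧ v ∈ s}
  have hbdd : BddAbove S := ⟨Nat.card V, by
    rintro _ ⟨s, rfl, -⟩
    have := Nat.card_le_card_of_injective s.toFun (Fin.injective_of_acyclic hacyc s.step)
    simp only [Nat.card_eq_fintype_card, Fintype.card_fin] at this
    omega⟩
  obtain ⟨s, hlen, i, rfl⟩ := Nat.sSup_mem (s := S) ⟨0, RelSeries.singleton _ v, rfl, 0, rfl⟩ hbdd
  have hmax (t : RelSeries r) (ht : s i ∈ t) : t.length ≤ s.length :=
    hlen ▸ le_csSup hbdd ⟨t, rfl, ht⟩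
  refine ⟨s.length, s, i, ⟨Fin.injective_of_acyclic hacyc s.step, s.step, fun u hu => ?_,
    fun u hu => ?_⟩, rfl⟩
  · linarith [hmax (s.cons u hu) ⟨_, s.cons_cast_succ u hu i⟩, s.cons_length u hu]
  · linarith [hmax (s.snoc u hu) ⟨_, s.snoc_cast_castSucc u hu i⟩, s.snoc_length u hu]

end Strings

namespace Lab

def rank : Lab → ℕ
  | zero => 0
  | c => 1
  | one => 2

instance : LinearOrder Lab :=
  LinearOrder.lift' rank fun a b h => by cases a <;> cases b <;> first | rfl | cases h

theorem lt_c_iff {a : Lab} : a < c ↔ a = zero := by cases a <;> decide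

theorem c_lt_iff {a : Lab} : c < a ↔ a = one := by cases a <;> decide

end Lab

section Labeling

variable {V : Type*} {E₁ E₂ : V → V → Prop} {ℓ : V → Lab} {u v : V}

theorem B1i.label_le (h : B1i E₁ ℓ) (huv : E₁ u v) : ℓ u ≤ ℓ v := by
  rcases h u v huv with h | h | h | h | h <;>
    simp only [Set.mem_singleton_iff, Prod.ext_iff] at h <;> rw [h.1, h.2] <;> decide

theorem B1i.ne_c_of_eq_c (h : B1i E₁ ℓ) (huv : E₁ u v) : ℓ u = Lab.c → ℓ v ≠ Lab.c := by
  rcases h u v huv with h | h | h | h | h <;>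
    simp only [Set.mem_singleton_iff, Prod.ext_iff] at h <;> rw [h.1, h.2] <;> decide

theorem B2i.label_le (h : B2i E₂ ℓ) (huv : E₂ u v) : ℓ v ≤ ℓ u := by
  rcases h u v huv with h | h | h | h <;>
    simp only [Set.mem_singleton_iff, Prod.ext_iff] at h <;> rw [h.1, h.2] <;> decide

theorem B2i.ne_c_of_eq_c (h : B2i E₂ ℓ) (huv : E₂ u v) : ℓ u = Lab.c → ℓ v ≠ Lab.c := by
  rcases h u v huv with h | h | h | h <;>
    simp only [Set.mem_singleton_iff, Prod.ext_iff] at h <;> rw [h.1, h.2] <;> decide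

theorem B2i.ne_zero_of_eq_one (h : B2i E₂ ℓ) (huv : E₂ u v) :
    ℓ u = Lab.one → ℓ v ≠ Lab.zero := by
  rcases h u v huv with h | h | h | h <;>
    simp only [Set.mem_singleton_iff, Prod.ext_iff] at h <;> rw [h.1, h.2] <;> decide

abbrev labelCentralVtx (ℓ : V → Lab) (v : V) : Prop := ℓ v = Lab.c

abbrev labelCentralEdge (E₁ : V → V → Prop) (ℓ : V → Lab) (u v : V) : Prop :=
  E₁ u v ∧ ℓ u = Lab.zero ∧ ℓ v = Lab.one

theorem labelCentralEdge.lt_c_and_c_lt (h : labelCentralEdge E₁ ℓ u v) :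
    ℓ u < Lab.c ∧ Lab.c < ℓ v :=
  ⟨Lab.lt_c_iff.2 h.2.1, Lab.c_lt_iff.2 h.2.2⟩

variable {n : ℕ} {p : Fin (n + 1) → V}

theorem IsMaxPath.monotone_label (hp : IsMaxPath E₁ n p) (h1i : B1i E₁ ℓ) :
    Monotone (ℓ ∘ p) :=
  Fin.monotone_iff_le_succ.2 fun j => h1i.label_le (hp.2.1 j)

theorem IsMaxPath.antitone_label (hp : IsMaxPath E₂ n p) (h2i : B2i E₂ ℓ) :
    Antitone (ℓ ∘ p) :=
  Fin.antitone_iff_succ_le.2 fun j => h2i.label_le (hp.2.1 j)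

theorem IsMaxPath.exists_central_after (hp : IsMaxPath E₁ n p) (h1ii : B1ii E₁ ℓ)
    {i : Fin (n + 1)} (hi : ℓ (p i) = Lab.zero) :
    (∃ j : Fin (n + 1), ℓ (p j) = Lab.c ∧ i < j) ∨
      ∃ j : Fin n, labelCentralEdge E₁ ℓ (p j.castSucc) (p j.succ) ∧ i ≤ j.castSucc := by
  obtain ⟨j, hij, -, hj, hj'⟩ := Fin.exists_castSucc_and_not_succ
    (P := fun k => ℓ (p k) = Lab.zero) (Fin.le_last i) hi ((h1ii _).2 hp.2.2.2)
  cases h : ℓ (p j.succ)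
  · exact absurd h hj'
  · exact .inl ⟨j.succ, h, Fin.le_castSucc_iff.1 hij⟩
  · exact .inr ⟨j, ⟨hp.2.1 j, hj, h⟩, hij⟩

theorem IsMaxPath.exists_central_before (hp : IsMaxPath E₁ n p) (h1ii : B1ii E₁ ℓ)
    {i : Fin (n + 1)} (hi : ℓ (p i) = Lab.one) :
    (∃ j : Fin (n + 1), ℓ (p j) = Lab.c ∧ j < i) ∨
      ∃ j : Fin n, labelCentralEdge E₁ ℓ (p j.castSucc) (p j.succ) ∧ j.castSucc < i := by
  obtain ⟨j, -, hji, hj, hj'⟩ := Fin.exists_castSucc_and_not_succ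
    (P := fun k => ℓ (p k) ≠ Lab.one) (Fin.zero_le i) ((h1ii _).1 hp.2.2.1) (not_not.2 hi)
  cases h : ℓ (p j.castSucc)
  · exact .inr ⟨j, ⟨hp.2.1 j, h, not_not.1 hj'⟩, Fin.castSucc_lt_iff_succ_le.2 hji⟩
  · exact .inl ⟨j.castSucc, h, Fin.castSucc_lt_iff_succ_le.2 hji⟩
  · exact absurd h hj

theorem IsMaxPath.exists_central (hp : IsMaxPath E₁ n p) (h1ii : B1ii E₁ ℓ) :
    (∃ i, ℓ (p i) = Lab.c) ∨ ∃ j : Fin n, labelCentralEdge E₁ ℓ (p j.castSucc) (p j.succ) := by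
  cases h : ℓ (p 0)
  · exact (hp.exists_central_after h1ii h).imp (Exists.imp fun _ => And.left)
      (Exists.imp fun _ => And.left)
  · exact .inl ⟨0, h⟩
  · exact absurd h ((h1ii _).1 hp.2.2.1)

theorem IsMaxPath.exists_label_eq_c (hp : IsMaxPath E₂ n p) (h2i : B2i E₂ ℓ)
    (h2ii : B2ii E₂ ℓ) : ∃ i, ℓ (p i) = Lab.c := by
  cases h : ℓ (p 0)
  · exact absurd h ((h2ii _).1 hp.2.2.1)
  · exact ⟨0, h⟩
  obtain ⟨j, -, -, hj, hj'⟩ := Fin.exists_castSucc_and_not_succ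
    (P := fun k => ℓ (p k) = Lab.one) (Fin.zero_le _) h ((h2ii _).2 hp.2.2.2)
  refine ⟨j.succ, ?_⟩
  cases h' : ℓ (p j.succ)
  · exact absurd h' (h2i.ne_zero_of_eq_one (hp.2.1 j) hj)
  · rfl
  · exact absurd h' hj'

theorem leftVtx_of_label_eq_zero [Finite V] (hacyc : ∀ v, ¬ TransGen E₁ v v)
    (h1ii : B1ii E₁ ℓ) (hv : ℓ v = Lab.zero) :
    LeftVtx E₁ (labelCentralVtx ℓ) (labelCentralEdge E₁ ℓ) v := by
  obtain ⟨n, p, i, hp, rfl⟩ := exists_isMaxPath_apply_eq hacyc v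
  exact ⟨n, p, i, hp, rfl, hp.exists_central_after h1ii hv⟩

theorem rightVtx_of_label_eq_one [Finite V] (hacyc : ∀ v, ¬ TransGen E₁ v v)
    (h1ii : B1ii E₁ ℓ) (hv : ℓ v = Lab.one) :
    RightVtx E₁ (labelCentralVtx ℓ) (labelCentralEdge E₁ ℓ) v := by
  obtain ⟨n, p, i, hp, rfl⟩ := exists_isMaxPath_apply_eq hacyc v
  exact ⟨n, p, i, hp, rfl, hp.exists_central_before h1ii hv⟩

theorem axiomB1_of_labeling (h1i : B1i E₁ ℓ) (h1ii : B1ii E₁ ℓ) :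
    AxiomB1 E₁ (labelCentralVtx ℓ) (labelCentralEdge E₁ ℓ) := by
  intro n p hp
  have hmono := hp.monotone_label h1i
  rcases hp.exists_central h1ii with ⟨i, hi⟩ | ⟨j, hj⟩
  · refine .inl ⟨⟨i, hi, fun k hk => ?_⟩, fun j hj => ?_⟩
    · exact hmono.eq_of_apply_eq_fin (fun j => h1i.ne_c_of_eq_c (hp.2.1 j)) hk hi
    · exact hmono.ne_of_lt_of_lt_fin j hj.lt_c_and_c_lt.1 hj.lt_c_and_c_lt.2 i hi
  · obtain ⟨hj₀, hj₁⟩ := hj.lt_c_and_c_lt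
    refine .inr ⟨⟨j, hj, fun k hk => ?_⟩, hmono.ne_of_lt_of_lt_fin j hj₀ hj₁⟩
    exact hmono.eq_of_lt_of_lt_fin hk.lt_c_and_c_lt.1 hk.lt_c_and_c_lt.2 hj₀ hj₁

theorem axiomB2_of_labeling (h2i : B2i E₂ ℓ) (h2ii : B2ii E₂ ℓ)
    (hleft : ∀ v, ℓ v = Lab.zero → LeftVtx E₁ (labelCentralVtx ℓ) (labelCentralEdge E₁ ℓ) v)
    (hright : ∀ v, ℓ v = Lab.one → RightVtx E₁ (labelCentralVtx ℓ) (labelCentralEdge E₁ ℓ) v) :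
    AxiomB2 E₁ E₂ (labelCentralVtx ℓ) (labelCentralEdge E₁ ℓ) := by
  intro n q hq
  have hanti := hq.antitone_label h2i
  have hunique : ∀ i k, ℓ (q i) = Lab.c → ℓ (q k) = Lab.c → i = k := fun i k =>
    hanti.dual_right.eq_of_apply_eq_fin (a := OrderDual.toDual Lab.c)
      fun j => h2i.ne_c_of_eq_c (hq.2.1 j)
  obtain ⟨i, hi⟩ := hq.exists_label_eq_c h2i h2ii
  refine ⟨⟨i, hi, fun k hk => hunique k i hk hi⟩, fun i' j hi' => ?_⟩
  obtain rfl := hunique i' i hi' hi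
  refine ⟨fun hji => hright _ (Lab.c_lt_iff.1 ?_), fun hij => hleft _ (Lab.lt_c_iff.1 ?_)⟩
  · rw [← hi]
    exact (hanti hji.le).lt_of_ne fun h => hji.ne (hunique _ _ (h.symm.trans hi) hi)
  · rw [← hi]
    exact (hanti hij.le).lt_of_ne' fun h => hij.ne' (hunique _ _ (h.symm.trans hi) hi)

end Labeling

theorem central_designation_of_local_axioms_general {V : Type*} [Fintype V]
    (E₁ E₂ : V → V → Prop)
    (hacyc : ∀ v : V, ¬ Relation.TransGen (fun a b => E₁ a b ∨ E₂ a b) v v)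
    (ℓ : V → Lab) (h1i : B1i E₁ ℓ) (h1ii : B1ii E₁ ℓ)
    (h2i : B2i E₂ ℓ) (h2ii : B2ii E₂ ℓ) :
    AxiomB1 E₁ (fun v => ℓ v = Lab.c)
      (fun u v => E₁ u v ∧ ℓ u = Lab.zero ∧ ℓ v = Lab.one) ∧
    AxiomB2 E₁ E₂ (fun v => ℓ v = Lab.c)
      (fun u v => E₁ u v ∧ ℓ u = Lab.zero ∧ ℓ v = Lab.one) ∧
    (∀ v : V, ℓ v = Lab.zero → LeftVtx E₁ (fun v => ℓ v = Lab.c)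
      (fun u v => E₁ u v ∧ ℓ u = Lab.zero ∧ ℓ v = Lab.one) v) ∧
    (∀ v : V, ℓ v = Lab.one → RightVtx E₁ (fun v => ℓ v = Lab.c)
      (fun u v => E₁ u v ∧ ℓ u = Lab.zero ∧ ℓ v = Lab.one) v) := by
  have hacyc₁ : ∀ v, ¬ TransGen E₁ v v := fun v h =>
    hacyc v (TransGen.mono (fun _ _ => Or.inl) _ _ h)
  have hleft := fun v (hv : ℓ v = Lab.zero) => leftVtx_of_label_eq_zero hacyc₁ h1ii hv
  have hright := fun v (hv : ℓ v = Lab.one) => rightVtx_of_label_eq_one hacyc₁ h1ii hv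
  exact ⟨axiomB1_of_labeling h1i h1ii, axiomB2_of_labeling h2i h2ii hleft hright, hleft, hright⟩

/-- In a finite acyclic 2-edge-colored digraph satisfying (B0), given a labeling `ℓ`
satisfying the local axioms (B1(i)), (B1(ii)), (B2(i)), (B2(ii)), declaring a vertex
central when `ℓ v = c` and a 1-edge `(u,v)` central when `(ℓ u, ℓ v) = (0,1)` yields a
designation of central elements satisfying (B1) and (B2); moreover every vertex labeled
`0` is left and every vertex labeled `1` is right with respect to this designation. -/
theorem central_designation_of_local_axioms {V : Type*} [Fintype V]
    (E₁ E₂ : V → V → Prop)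
    (hacyc : ∀ v : V, ¬ Relation.TransGen (fun a b => E₁ a b ∨ E₂ a b) v v)
    (hB0₁ : AxiomB0 E₁) (hB0₂ : AxiomB0 E₂)
    (ℓ : V → Lab) (h1i : B1i E₁ ℓ) (h1ii : B1ii E₁ ℓ)
    (h2i : B2i E₂ ℓ) (h2ii : B2ii E₂ ℓ) :
    AxiomB1 E₁ (fun v => ℓ v = Lab.c)
      (fun u v => E₁ u v ∧ ℓ u = Lab.zero ∧ ℓ v = Lab.one) ∧
    AxiomB2 E₁ E₂ (fun v => ℓ v = Lab.c)
      (fun u v => E₁ u v ∧ ℓ u = Lab.zero ∧ ℓ v = Lab.one) ∧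
    (∀ v : V, ℓ v = Lab.zero → LeftVtx E₁ (fun v => ℓ v = Lab.c)
      (fun u v => E₁ u v ∧ ℓ u = Lab.zero ∧ ℓ v = Lab.one) v) ∧
    (∀ v : V, ℓ v = Lab.one → RightVtx E₁ (fun v => ℓ v = Lab.c)
      (fun u v => E₁ u v ∧ ℓ u = Lab.zero ∧ ℓ v = Lab.one) v) :=
  central_designation_of_local_axioms_general E₁ E₂ hacyc ℓ h1i h1ii h2i h2ii
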